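/- arXiv:2206.01503 — 4 statements merged into one kernel-verified Lean document; each statement's English description precedes it below -/
import Mathlib

section
/- Let A_1 = [[0,1],[1,0]], A_2 = [[0,−i],[i,0]], A_3 = [[1,0],[0,−1]] be the Pauli matrices and A = (A_1, A_2, A_3). Then dist(A, C³ I)² > 2 = max_{‖x‖=1} var_x(A); in particular the distance formula dist(A, C^d I)² = sup var_x(A) fails for this commuting-free triple. -/
/-!
Each Pauli matrix is a self-adjoint unitary, so `‖σⱼ x‖ = ‖x‖`, and for a unit vector `x` the
expectations `⟨x, σⱼ x⟩` form a unit (Bloch) vector in `ℝ³`; hence `var_x(A) = 3 - 1 = 2`.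
On the other side the `σⱼ` are traceless, so `tr (σⱼ - zⱼ)*(σⱼ - zⱼ) = 2 + 2|zⱼ|² ≥ 2`. The
operator norm of an `n × n` matrix is at least `1/n` of its trace, whence
`‖A - zI‖² ≥ 6 / 2 = 3` for every `z`.
-/

open Matrix

/-- The ℓ²-operator norm of a complex matrix. -/
noncomputable def matOpNorm {n : Type*} [Fintype n] [DecidableEq n]
    (M : Matrix n n ℂ) : ℝ :=
  ‖Matrix.toEuclideanCLM (𝕜 := ℂ) M‖

/-- The norm `‖A‖ = ‖∑ⱼ Aⱼ* Aⱼ‖^{1/2}` of a tuple of matrices. -/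
noncomputable def tupNorm {n : Type*} [Fintype n] [DecidableEq n] {d : ℕ}
    (A : Fin d → Matrix n n ℂ) : ℝ :=
  Real.sqrt (matOpNorm (∑ j, (A j)ᴴ * A j))

/-- The squared euclidean norm of a complex vector. -/
noncomputable def vecNormSq {n : Type*} [Fintype n] (y : n → ℂ) : ℝ := (star y ⬝ᵥ y).re

/-- `var_x(A) = ‖Ax‖² - ∑ⱼ |⟨x, Aⱼx⟩|²` for a tuple of matrices. -/
noncomputable def matVar {n : Type*} [Fintype n] {d : ℕ}
    (A : Fin d → Matrix n n ℂ) (x : n → ℂ) : ℝ :=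
  (∑ j, vecNormSq ((A j).mulVec x)) -
    ∑ j, ‖star x ⬝ᵥ (A j).mulVec x‖ ^ 2

lemma re_dotProduct_mulVec_le_matOpNorm {n : Type*} [Fintype n] [DecidableEq n]
    (M : Matrix n n ℂ) (x : EuclideanSpace ℂ n) (hx : ‖x‖ = 1) :
    (star (x : n → ℂ) ⬝ᵥ M *ᵥ x).re ≤ matOpNorm M := by
  have hinner : inner ℂ x (toEuclideanCLM (𝕜 := ℂ) M x) = star (x : n → ℂ) ⬝ᵥ M *ᵥ x := by
    rw [← WithLp.toLp_ofLp (p := 2) x, Matrix.toEuclideanCLM_toLp, EuclideanSpace.inner_toLp_toLp,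
      dotProduct_comm]
  calc (star (x : n → ℂ) ⬝ᵥ M *ᵥ x).re ≤ ‖inner ℂ x (toEuclideanCLM (𝕜 := ℂ) M x)‖ :=
        hinner ▸ Complex.re_le_norm _
    _ ≤ ‖x‖ * ‖toEuclideanCLM (𝕜 := ℂ) M x‖ := norm_inner_le_norm _ _
    _ ≤ ‖x‖ * (matOpNorm M * ‖x‖) := by gcongr; exact (toEuclideanCLM (𝕜 := ℂ) M).le_opNorm x
    _ = matOpNorm M := by rw [hx]; ring

lemma re_trace_le_card_mul_matOpNorm {n : Type*} [Fintype n] [DecidableEq n]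
    (M : Matrix n n ℂ) : (trace M).re ≤ Fintype.card n * matOpNorm M := by
  have hdiag (i : n) : (M i i).re ≤ matOpNorm M := by
    simpa [mulVec_single, dotProduct_single] using
      re_dotProduct_mulVec_le_matOpNorm M (EuclideanSpace.single i 1) (by simp)
  simpa [trace, Complex.re_sum] using Finset.sum_le_sum fun i (_ : i ∈ Finset.univ) => hdiag i

lemma trace_conjTranspose_mul_sub_smul_one {n : Type*} [Fintype n] [DecidableEq n]
    (B : Matrix n n ℂ) (hB : trace B = 0) (z : ℂ) :
    trace ((B - z • 1)ᴴ * (B - z • 1)) = trace (Bᴴ * B) + Fintype.card n * ‖z‖ ^ 2 := by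
  have hBH : trace Bᴴ = 0 := by rw [trace_conjTranspose, hB, star_zero]
  simp only [conjTranspose_sub, conjTranspose_smul, conjTranspose_one, sub_mul, mul_sub,
    Matrix.smul_mul, Matrix.mul_smul, Matrix.one_mul, Matrix.mul_one, smul_smul, trace_sub,
    trace_smul, trace_one, hB, hBH, smul_zero, sub_zero]
  rw [Complex.star_def, Complex.mul_conj', smul_eq_mul]
  ring

lemma sq_tupNorm {n : Type*} [Fintype n] [DecidableEq n] {d : ℕ} (A : Fin d → Matrix n n ℂ) :
    tupNorm A ^ 2 = matOpNorm (∑ j, (A j)ᴴ * A j) :=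
  Real.sq_sqrt (norm_nonneg _)

lemma sum_re_trace_le_card_mul_sq_tupNorm_sub_smul_one {n : Type*} [Fintype n] [DecidableEq n]
    {d : ℕ} (A : Fin d → Matrix n n ℂ) (hA : ∀ j, trace (A j) = 0) (z : Fin d → ℂ) :
    ∑ j, (trace ((A j)ᴴ * A j)).re ≤ Fintype.card n * tupNorm (fun j => A j - z j • 1) ^ 2 := by
  calc ∑ j, (trace ((A j)ᴴ * A j)).re
      ≤ ∑ j, (trace ((A j - z j • 1)ᴴ * (A j - z j • 1))).re := by
        refine Finset.sum_le_sum fun j _ => ?_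
        rw [trace_conjTranspose_mul_sub_smul_one _ (hA j)]
        simp only [Complex.add_re, le_add_iff_nonneg_right]
        norm_cast
        positivity
    _ = (trace (∑ j, (A j - z j • 1)ᴴ * (A j - z j • 1))).re := by
        rw [trace_sum, Complex.re_sum]
    _ ≤ _ := by rw [sq_tupNorm]; exact re_trace_le_card_mul_matOpNorm _

def pauli : Fin 3 → Matrix (Fin 2) (Fin 2) ℂ :=
  ![!![0, 1; 1, 0], !![0, -Complex.I; Complex.I, 0], !![1, 0; 0, -1]]

lemma trace_pauli (j : Fin 3) : trace (pauli j) = 0 := by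
  fin_cases j <;> simp [pauli, trace, Fin.sum_univ_two]

lemma conjTranspose_pauli_mul_self (j : Fin 3) : (pauli j)ᴴ * pauli j = 1 := by
  fin_cases j <;> ext i k <;> fin_cases i <;> fin_cases k <;>
    simp [pauli, Matrix.mul_apply, Fin.sum_univ_two]

lemma vecNormSq_mulVec_of_conjTranspose_mul_self {n : Type*} [Fintype n] [DecidableEq n]
    {M : Matrix n n ℂ} (hM : Mᴴ * M = 1) (x : n → ℂ) : vecNormSq (M *ᵥ x) = vecNormSq x := by
  rw [vecNormSq, star_mulVec, ← dotProduct_mulVec, mulVec_mulVec, hM, one_mulVec, vecNormSq]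

lemma sum_sq_norm_dotProduct_pauli_mulVec (x : Fin 2 → ℂ) :
    ∑ j, ‖star x ⬝ᵥ pauli j *ᵥ x‖ ^ 2 = vecNormSq x ^ 2 := by
  simp only [Complex.sq_norm, Complex.normSq_apply, vecNormSq, pauli, Fin.sum_univ_three,
    Fin.sum_univ_two, mulVec, dotProduct, Pi.star_apply, cons_val', cons_val_zero, cons_val_one,
    cons_val_fin_one, cons_val, of_apply]
  simp only [Complex.add_re, Complex.add_im, Complex.mul_re, Complex.mul_im, Complex.star_def,
    Complex.conj_re, Complex.conj_im, Complex.zero_re, Complex.zero_im, Complex.one_re,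
    Complex.one_im, Complex.neg_re, Complex.neg_im, Complex.I_re, Complex.I_im]
  ring

lemma matVar_pauli (x : Fin 2 → ℂ) (hx : star x ⬝ᵥ x = 1) : matVar pauli x = 2 := by
  have hx' : vecNormSq x = 1 := by simp [vecNormSq, hx]
  have hunitary (j : Fin 3) : vecNormSq (pauli j *ᵥ x) = 1 :=
    (vecNormSq_mulVec_of_conjTranspose_mul_self (conjTranspose_pauli_mul_self j) x).trans hx'
  rw [matVar, sum_sq_norm_dotProduct_pauli_mulVec, hx', Fintype.sum_congr _ _ hunitary]
  norm_num

lemma three_le_sq_tupNorm_pauli_sub_smul_one (z : Fin 3 → ℂ) :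
    3 ≤ tupNorm (fun j => pauli j - z j • 1) ^ 2 := by
  have := sum_re_trace_le_card_mul_sq_tupNorm_sub_smul_one pauli trace_pauli z
  norm_num [conjTranspose_pauli_mul_self] at this
  linarith

/-- for the Pauli triple `A = (σ₁, σ₂, σ₃)`, the maximum of
`var_x(A)` over unit vectors is `2`, while `dist(A, ℂ³I)² > 2`; so the distance
formula fails for this tuple. -/
theorem pauli_counterexample :
    let A : Fin 3 → Matrix (Fin 2) (Fin 2) ℂ :=
      ![!![0, 1; 1, 0], !![0, -Complex.I; Complex.I, 0], !![1, 0; 0, -1]]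
    IsGreatest {v : ℝ | ∃ x : Fin 2 → ℂ, star x ⬝ᵥ x = 1 ∧ v = matVar A x} 2 ∧
      (⨅ z : Fin 3 → ℂ,
          tupNorm (fun j => A j - z j • (1 : Matrix (Fin 2) (Fin 2) ℂ))) ^ 2 > 2 := by
  intro A
  have hunit : star ![1, 0] ⬝ᵥ ![1, 0] = (1 : ℂ) := by simp [dotProduct]
  refine ⟨⟨⟨![1, 0], hunit, (matVar_pauli _ hunit).symm⟩, ?_⟩, ?_⟩
  · rintro v ⟨x, hx, rfl⟩
    exact (matVar_pauli x hx).le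
  · have hdist : √3 ≤ ⨅ z : Fin 3 → ℂ, tupNorm (fun j => pauli j - z j • 1) :=
      le_ciInf fun z =>
        Real.sqrt_le_iff.mpr ⟨Real.sqrt_nonneg _, three_le_sq_tupNorm_pauli_sub_smul_one z⟩
    exact lt_of_lt_of_le (by norm_num) (Real.sqrt_le_iff.mp hdist).2
end

section
/- Let A be a tuple of bounded operators on H, z⁰ the minimizer of ‖A − zI‖ over z ∈ C^d, and A⁰ = A − z⁰I. Then dist(A, C^d I)² = sup_{‖x‖=1} var_x(A) holds if and only if 0 ∈ W₀(A⁰), i.e. there is a sequence of unit vectors x_n with ‖A⁰ x_n‖ → ‖A⁰‖ and ⟨x_n, A_j⁰ x_n⟩ → 0 for all j. -/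
/-!
Subtracting scalars `zⱼ` from the `Aⱼ` does not change `var_x` for unit `x`, so
`var_x(A) = ‖A⁰x‖² - ∑ⱼ |⟨x, A⁰ⱼx⟩|² ≤ ‖A⁰‖² = dist(A, ℂᵈI)²`. Both terms being controlled,
a sequence of unit vectors along which `var_x(A) → ‖A⁰‖²` is exactly one along which
`‖A⁰xₙ‖ → ‖A⁰‖` and every `⟨xₙ, A⁰ⱼxₙ⟩ → 0`.
-/

open Filter Topology

variable {H : Type*} [NormedAddCommGroup H] [InnerProductSpace ℂ H] [CompleteSpace H]

/-- The norm `‖A‖ = ‖∑ⱼ Aⱼ* Aⱼ‖^{1/2}` of a tuple of operators viewed as an operator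
`H → H^d`. -/
noncomputable def opTupNorm {d : ℕ} (A : Fin d → H →L[ℂ] H) : ℝ :=
  Real.sqrt ‖∑ j, ContinuousLinearMap.adjoint (A j) * A j‖

/-- `var_x(A) = ‖Ax‖² - ∑ⱼ |⟨x, Aⱼx⟩|²`. -/
noncomputable def opVar {d : ℕ} (A : Fin d → H →L[ℂ] H) (x : H) : ℝ :=
  (∑ j, ‖A j x‖ ^ 2) - ∑ j, ‖(inner ℂ x (A j x) : ℂ)‖ ^ 2

/-- The joint maximal numerical range `W₀(A)`: all limits of
`(⟨xₙ, A₁xₙ⟩, …, ⟨xₙ, A_d xₙ⟩)` along sequences of unit vectors `xₙ` with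
`‖A xₙ‖ → ‖A‖`. -/
def W0 {d : ℕ} (A : Fin d → H →L[ℂ] H) : Set (Fin d → ℂ) :=
  {lam | ∃ x : ℕ → H, (∀ n, ‖x n‖ = 1) ∧
    Tendsto (fun n => Real.sqrt (∑ j, ‖A j (x n)‖ ^ 2)) atTop (nhds (opTupNorm A)) ∧
    ∀ j, Tendsto (fun n => (inner ℂ (x n) (A j (x n)) : ℂ)) atTop (nhds (lam j))}

section RealLimits

variable {α ι : Type*}

theorem csSup_image_eq_iff_exists_seq_tendsto {f : α → ℝ} {s : Set α} {M : ℝ}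
    (hs : s.Nonempty) (hM : ∀ x ∈ s, f x ≤ M) :
    sSup (f '' s) = M ↔ ∃ x : ℕ → α, (∀ n, x n ∈ s) ∧ Tendsto (f ∘ x) atTop (𝓝 M) := by
  constructor
  · intro hsup
    obtain ⟨u, -, hu, hmem⟩ :=
      exists_seq_tendsto_sSup (hs.image f) ⟨M, Set.forall_mem_image.2 hM⟩
    choose x hx hfx using hmem
    refine ⟨x, hx, ?_⟩
    simpa only [Function.comp_def, hfx, hsup] using hu
  · rintro ⟨x, hx, hfx⟩
    refine IsLUB.csSup_eq ⟨Set.forall_mem_image.2 hM, fun b hb => ?_⟩ (hs.image f)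
    exact le_of_tendsto' hfx fun n => hb ⟨x n, hx n, rfl⟩

theorem tendsto_sub_nhds_iff_of_le_of_nonneg {l : Filter α} {a b : α → ℝ} {M : ℝ}
    (ha : ∀ n, a n ≤ M) (hb : ∀ n, 0 ≤ b n) :
    Tendsto (fun n => a n - b n) l (𝓝 M) ↔ Tendsto a l (𝓝 M) ∧ Tendsto b l (𝓝 0) := by
  constructor
  · intro hab
    have ha' : Tendsto a l (𝓝 M) :=
      tendsto_of_tendsto_of_tendsto_of_le_of_le hab tendsto_const_nhds
        (fun n => sub_le_self _ (hb n)) ha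
    refine ⟨ha', ?_⟩
    simpa using ha'.sub hab
  · rintro ⟨ha', hb'⟩
    simpa using ha'.sub hb'

theorem tendsto_sqrt_nhds_iff {l : Filter α} {a : α → ℝ} {M : ℝ}
    (ha : ∀ n, 0 ≤ a n) (hM : 0 ≤ M) :
    Tendsto (fun n => Real.sqrt (a n)) l (𝓝 M) ↔ Tendsto a l (𝓝 (M ^ 2)) := by
  constructor
  · intro h
    simpa only [Real.sq_sqrt (ha _)] using h.pow 2
  · intro h
    simpa only [Real.sqrt_sq hM] using h.sqrt

theorem tendsto_sum_norm_sq_nhds_zero_iff {E : Type*} [SeminormedAddCommGroup E] [Fintype ι]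
    {l : Filter α} {c : α → ι → E} :
    Tendsto (fun n => ∑ j, ‖c n j‖ ^ 2) l (𝓝 0) ↔ ∀ j, Tendsto (fun n => c n j) l (𝓝 0) := by
  constructor
  · intro h j
    have hsq : Tendsto (fun n => ‖c n j‖ ^ 2) l (𝓝 0) :=
      squeeze_zero (fun _ => sq_nonneg _)
        (fun n => Finset.single_le_sum (f := fun i => ‖c n i‖ ^ 2)
          (fun _ _ => sq_nonneg _) (Finset.mem_univ j)) h
    refine tendsto_zero_iff_norm_tendsto_zero.2 ?_
    simpa only [Real.sqrt_sq (norm_nonneg _), Real.sqrt_zero] using hsq.sqrt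
  · intro h
    simpa using tendsto_finsetSum Finset.univ fun j _ =>
      (tendsto_zero_iff_norm_tendsto_zero.1 (h j)).pow 2

end RealLimits

theorem norm_sub_smul_sq_sub_norm_inner_sub_sq {𝕜 E : Type*} [RCLike 𝕜] [NormedAddCommGroup E]
    [InnerProductSpace 𝕜 E] {x : E} (hx : ‖x‖ = 1) (y : E) (w : 𝕜) :
    ‖y - w • x‖ ^ 2 - ‖(inner 𝕜 x y : 𝕜) - w‖ ^ 2 = ‖y‖ ^ 2 - ‖(inner 𝕜 x y : 𝕜)‖ ^ 2 := by
  rw [@norm_sub_sq 𝕜, @norm_sub_sq 𝕜 𝕜, inner_smul_right, norm_smul, hx, mul_one,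
    RCLike.inner_apply, inner_conj_symm]
  ring

section Tuple

variable {d : ℕ}

theorem opVar_sub_smul_one {E : Type*} [NormedAddCommGroup E] [InnerProductSpace ℂ E]
    (A : Fin d → E →L[ℂ] E) (z : Fin d → ℂ) {x : E} (hx : ‖x‖ = 1) :
    opVar (fun j => A j - z j • (1 : E →L[ℂ] E)) x = opVar A x := by
  unfold opVar
  rw [← Finset.sum_sub_distrib, ← Finset.sum_sub_distrib]
  refine Finset.sum_congr rfl fun j _ => ?_
  rw [sub_apply, smul_apply, one_apply_eq_self, inner_sub_right, inner_smul_right,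
    inner_self_eq_one_of_norm_eq_one hx, mul_one]
  exact norm_sub_smul_sq_sub_norm_inner_sub_sq hx (A j x) (z j)

theorem opTupNorm_nonneg (A : Fin d → H →L[ℂ] H) : 0 ≤ opTupNorm A :=
  Real.sqrt_nonneg _

theorem sum_norm_sq_apply_le_opTupNorm_sq (A : Fin d → H →L[ℂ] H) (x : H) :
    ∑ j, ‖A j x‖ ^ 2 ≤ opTupNorm A ^ 2 * ‖x‖ ^ 2 := by
  set T := ∑ j, ContinuousLinearMap.adjoint (A j) * A j
  have hT : ∑ j, ‖A j x‖ ^ 2 = RCLike.re (inner ℂ x (T x)) := by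
    simp only [T, sum_apply, inner_sum, map_sum]
    exact Finset.sum_congr rfl fun j _ => (A j).apply_norm_sq_eq_inner_adjoint_right x
  calc ∑ j, ‖A j x‖ ^ 2 = RCLike.re (inner ℂ x (T x)) := hT
    _ ≤ ‖x‖ * ‖T x‖ := (RCLike.re_le_norm _).trans (norm_inner_le_norm _ _)
    _ ≤ ‖x‖ * (‖T‖ * ‖x‖) := by gcongr; exact T.le_opNorm x
    _ = opTupNorm A ^ 2 * ‖x‖ ^ 2 := by rw [opTupNorm, Real.sq_sqrt (norm_nonneg _)]; ring

theorem opVar_le_opTupNorm_sq (A : Fin d → H →L[ℂ] H) {x : H} (hx : ‖x‖ = 1) :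
    opVar A x ≤ opTupNorm A ^ 2 := by
  have h := sum_norm_sq_apply_le_opTupNorm_sq A x
  rw [hx, one_pow, mul_one] at h
  exact (sub_le_self _ (Finset.sum_nonneg fun _ _ => sq_nonneg _)).trans h

theorem tendsto_opVar_iff (A : Fin d → H →L[ℂ] H) {x : ℕ → H} (hx : ∀ n, ‖x n‖ = 1) :
    Tendsto (fun n => opVar A (x n)) atTop (𝓝 (opTupNorm A ^ 2)) ↔
      Tendsto (fun n => Real.sqrt (∑ j, ‖A j (x n)‖ ^ 2)) atTop (𝓝 (opTupNorm A)) ∧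
        ∀ j, Tendsto (fun n => (inner ℂ (x n) (A j (x n)) : ℂ)) atTop (𝓝 0) := by
  have hle : ∀ n, ∑ j, ‖A j (x n)‖ ^ 2 ≤ opTupNorm A ^ 2 := fun n => by
    simpa [hx n] using sum_norm_sq_apply_le_opTupNorm_sq A (x n)
  unfold opVar
  rw [tendsto_sub_nhds_iff_of_le_of_nonneg hle
      (fun n => Finset.sum_nonneg fun _ _ => sq_nonneg _),
    ← tendsto_sqrt_nhds_iff (fun n => Finset.sum_nonneg fun _ _ => sq_nonneg _)
      (opTupNorm_nonneg A),
    tendsto_sum_norm_sq_nhds_zero_iff]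

theorem zero_mem_W0_iff (A : Fin d → H →L[ℂ] H) :
    0 ∈ W0 A ↔ ∃ x : ℕ → H, (∀ n, ‖x n‖ = 1) ∧
      Tendsto (fun n => opVar A (x n)) atTop (𝓝 (opTupNorm A ^ 2)) :=
  exists_congr fun _ => and_congr_right fun hx => (tendsto_opVar_iff A hx).symm

end Tuple

/-- with `z⁰` the minimizer of `‖A - zI‖` and `A⁰ = A - z⁰I`, the
distance formula `dist(A, ℂᵈI)² = sup_{‖x‖=1} var_x(A)` holds iff `0 ∈ W₀(A⁰)`. -/
theorem dist_formula_iff_zero_mem_W0 [Nontrivial H]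
    {d : ℕ} (A : Fin d → H →L[ℂ] H) (z0 : Fin d → ℂ)
    (hz0 : ∀ z : Fin d → ℂ,
      opTupNorm (fun j => A j - z0 j • (1 : H →L[ℂ] H)) ≤
        opTupNorm (fun j => A j - z j • (1 : H →L[ℂ] H))) :
    (sSup {v : ℝ | ∃ x : H, ‖x‖ = 1 ∧ v = opVar A x} =
        (⨅ z : Fin d → ℂ, opTupNorm (fun j => A j - z j • (1 : H →L[ℂ] H))) ^ 2) ↔
      (0 : Fin d → ℂ) ∈ W0 (fun j => A j - z0 j • (1 : H →L[ℂ] H)) := by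
  set A0 : Fin d → H →L[ℂ] H := fun j => A j - z0 j • (1 : H →L[ℂ] H)
  have hinf : ⨅ z : Fin d → ℂ, opTupNorm (fun j => A j - z j • (1 : H →L[ℂ] H)) =
      opTupNorm A0 :=
    le_antisymm (ciInf_le ⟨0, Set.forall_mem_range.2 fun _ => opTupNorm_nonneg _⟩ z0)
      (le_ciInf hz0)
  have hvar : {v : ℝ | ∃ x : H, ‖x‖ = 1 ∧ v = opVar A x} = opVar A0 '' Metric.sphere 0 1 := by
    ext v
    simp only [Set.mem_ofPred_eq, Set.mem_image, mem_sphere_zero_iff_norm]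
    exact exists_congr fun x => and_congr_right fun hx => by
      rw [opVar_sub_smul_one A z0 hx, eq_comm]
  rw [hinf, hvar, csSup_image_eq_iff_exists_seq_tendsto
      (NormedSpace.sphere_nonempty.2 zero_le_one)
      (fun x hx => opVar_le_opTupNorm_sq A0 (mem_sphere_zero_iff_norm.1 hx)),
    zero_mem_W0_iff]
  simp only [mem_sphere_zero_iff_norm, Function.comp_def]
end

section
/- With the same setup, 0 ∈ W₀(A⁰) if and only if dist(A, C^d I) = sup{ |⟨Ax, y⟩| : x ∈ H, y ∈ H^d, ‖x‖ = ‖y‖ = 1, ⟨x, y_j⟩ = 0 for all 1 ≤ j ≤ d }. -/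
/-!
For a unit vector `x`, Cauchy–Schwarz bounds `|⟨Ax, y⟩|` over unit `y ⊥ x` by `var_x(A)^{1/2}`,
with equality at `y` proportional to the components `Aⱼx - ⟨x, Aⱼx⟩x` orthogonal to `x`; and
neither side changes under `A ↦ A - zI`. So the supremum in question is `sup_x var_x(A⁰)^{1/2}`.
Since `var_x(A⁰) = ‖A⁰x‖² - ∑ⱼ |⟨x, A⁰ⱼx⟩|²` and `‖A⁰x‖ ≤ ‖A⁰‖`, unit vectors with
`var_{xₙ}(A⁰) → ‖A⁰‖²` are exactly those with `‖A⁰xₙ‖ → ‖A⁰‖` and `⟨xₙ, A⁰ⱼxₙ⟩ → 0`: thus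
`0 ∈ W₀(A⁰)` iff `‖A⁰‖ = dist(A, ℂᵈI)` lies in the closure of `{var_x(A⁰)^{1/2}}`, i.e. is
its supremum.
-/

open Filter Topology

variable {H : Type*} [NormedAddCommGroup H] [InnerProductSpace ℂ H] [CompleteSpace H]

theorem mem_closure_iff_csSup_eq {α : Type*} [ConditionallyCompleteLinearOrder α]
    [TopologicalSpace α] [OrderTopology α] {s : Set α} {a : α} (hs : s.Nonempty)
    (ha : a ∈ upperBounds s) : a ∈ closure s ↔ sSup s = a :=
  ⟨fun h => (isLUB_of_mem_closure ha h).csSup_eq hs, fun h => h ▸ csSup_mem_closure hs ⟨a, ha⟩⟩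

section Variance

variable {E : Type*} [NormedAddCommGroup E] [InnerProductSpace ℂ E] {x : E}

lemma inner_sub_inner_smul_self_eq_zero (hx : ‖x‖ = 1) (v : E) :
    inner ℂ x (v - inner ℂ x v • x) = 0 := by
  rw [inner_sub_right, inner_smul_right, inner_self_eq_norm_sq_to_K, hx]
  simp

lemma inner_sub_inner_smul_self_eq_norm_sq (hx : ‖x‖ = 1) (v : E) :
    inner ℂ v (v - inner ℂ x v • x) = (‖v - inner ℂ x v • x‖ ^ 2 : ℝ) := by
  set u := v - inner ℂ x v • x
  have hv : v = u + inner ℂ x v • x := (sub_add_cancel _ _).symm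
  rw [hv, inner_add_left, inner_smul_left, inner_sub_inner_smul_self_eq_zero hx,
    inner_self_eq_norm_sq_to_K]
  simp

lemma norm_sq_eq_norm_sub_inner_smul_sq_add (hx : ‖x‖ = 1) (v : E) :
    ‖v‖ ^ 2 = ‖v - inner ℂ x v • x‖ ^ 2 + ‖inner ℂ x v‖ ^ 2 := by
  have h : inner ℂ (v - inner ℂ x v • x) (inner ℂ x v • x) = 0 := by
    rw [inner_smul_right, inner_eq_zero_symm.1 (inner_sub_inner_smul_self_eq_zero hx v), mul_zero]
  have := norm_add_sq_eq_norm_sq_add_norm_sq_of_inner_eq_zero _ _ h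
  rw [sub_add_cancel, norm_smul, hx, mul_one] at this
  simpa only [sq] using this

variable {d : ℕ} (B : Fin d → E →L[ℂ] E)

lemma opVar_le_sum_norm_sq (x : E) : opVar B x ≤ ∑ j, ‖B j x‖ ^ 2 :=
  sub_le_self _ (Finset.sum_nonneg fun _ _ => sq_nonneg _)

lemma opVar_eq_sum_norm_sub_sq (hx : ‖x‖ = 1) :
    opVar B x = ∑ j, ‖B j x - inner ℂ x (B j x) • x‖ ^ 2 := by
  simp only [opVar, norm_sq_eq_norm_sub_inner_smul_sq_add hx (B _ x), Finset.sum_add_distrib,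
    add_sub_cancel_right]

lemma opVar_nonneg (hx : ‖x‖ = 1) : 0 ≤ opVar B x := by
  rw [opVar_eq_sum_norm_sub_sq B hx]
  exact Finset.sum_nonneg fun _ _ => sq_nonneg _

lemma norm_sum_inner_le_sqrt_opVar {y : Fin d → E} (hx : ‖x‖ = 1)
    (hy : ∑ j, ‖y j‖ ^ 2 = 1) (hxy : ∀ j, inner ℂ x (y j) = 0) :
    ‖∑ j, inner ℂ (B j x) (y j)‖ ≤ √(opVar B x) := by
  set u := fun j => B j x - inner ℂ x (B j x) • x
  have hu : ∀ j, inner ℂ (B j x) (y j) = inner ℂ (u j) (y j) := fun j => by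
    simp [u, hxy j]
  calc ‖∑ j, inner ℂ (B j x) (y j)‖ ≤ ∑ j, ‖u j‖ * ‖y j‖ := by
        simp_rw [hu]
        exact (norm_sum_le _ _).trans (Finset.sum_le_sum fun j _ => norm_inner_le_norm _ _)
    _ ≤ √(∑ j, ‖u j‖ ^ 2) * √(∑ j, ‖y j‖ ^ 2) := Real.sum_mul_le_sqrt_mul_sqrt _ _ _
    _ = √(opVar B x) := by rw [hy, Real.sqrt_one, mul_one, opVar_eq_sum_norm_sub_sq B hx]

lemma exists_sqrt_opVar_eq_norm_sum_inner (hx : ‖x‖ = 1) (hvar : 0 < opVar B x) :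
    ∃ y : Fin d → E, ∑ j, ‖y j‖ ^ 2 = 1 ∧ (∀ j, inner ℂ x (y j) = 0) ∧
      √(opVar B x) = ‖∑ j, inner ℂ (B j x) (y j)‖ := by
  set s := √(opVar B x)
  have hs : 0 < s := Real.sqrt_pos.2 hvar
  have hs2 : s ^ 2 = opVar B x := Real.sq_sqrt hvar.le
  set u := fun j => B j x - inner ℂ x (B j x) • x
  refine ⟨fun j => (s⁻¹ : ℂ) • u j, ?_, fun j => ?_, ?_⟩
  · simp only [norm_smul, mul_pow, ← Finset.mul_sum, u, ← opVar_eq_sum_norm_sub_sq B hx, ← hs2]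
    simp [hs.ne']
  · rw [inner_smul_right, inner_sub_inner_smul_self_eq_zero hx, mul_zero]
  · simp only [inner_smul_right, ← Finset.mul_sum, u, inner_sub_inner_smul_self_eq_norm_sq hx]
    rw [← Complex.ofReal_sum, ← opVar_eq_sum_norm_sub_sq B hx, ← hs2, norm_mul, norm_inv,
      Complex.norm_real, Complex.norm_real, Real.norm_of_nonneg hs.le,
      Real.norm_of_nonneg (by positivity)]
    field_simp

def opStdDevSet : Set ℝ := (fun x => √(opVar B x)) '' Metric.sphere 0 1

def orthoPairingSet : Set ℝ :=
  {r | ∃ (x : E) (y : Fin d → E), ‖x‖ = 1 ∧ ∑ j, ‖y j‖ ^ 2 = 1 ∧ (∀ j, inner ℂ x (y j) = 0) ∧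
    r = ‖∑ j, inner ℂ (B j x) (y j)‖}

lemma orthoPairingSet_sub_smul_one (z : Fin d → ℂ) :
    orthoPairingSet (fun j => B j - z j • (1 : E →L[ℂ] E)) = orthoPairingSet B := by
  ext r
  refine exists_congr fun x => exists_congr fun y => and_congr_right fun _ =>
    and_congr_right fun _ => and_congr_right fun hxy => ?_
  simp [hxy]

end Variance

section OpTupNorm

variable {d : ℕ} (B : Fin d → H →L[ℂ] H)

lemma inner_sum_adjoint_mul_self_apply (x : H) :
    inner ℂ x ((∑ j, ContinuousLinearMap.adjoint (B j) * B j) x) =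
      ((∑ j, ‖B j x‖ ^ 2 : ℝ) : ℂ) := by
  simp only [sum_apply, inner_sum, mul_apply_eq_comp, ContinuousLinearMap.adjoint_inner_right,
    inner_self_eq_norm_sq_to_K]
  norm_cast

lemma sum_norm_sq_le_opTupNorm_sq_mul (x : H) :
    ∑ j, ‖B j x‖ ^ 2 ≤ opTupNorm B ^ 2 * ‖x‖ ^ 2 := by
  set T := ∑ j, ContinuousLinearMap.adjoint (B j) * B j
  have hT : opTupNorm B ^ 2 = ‖T‖ := Real.sq_sqrt (norm_nonneg _)
  calc ∑ j, ‖B j x‖ ^ 2 = (inner ℂ x (T x)).re := by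
        rw [inner_sum_adjoint_mul_self_apply, Complex.ofReal_re]
    _ ≤ ‖x‖ * ‖T x‖ := (Complex.re_le_norm _).trans (norm_inner_le_norm _ _)
    _ ≤ ‖x‖ * (‖T‖ * ‖x‖) := by gcongr; exact T.le_opNorm x
    _ = opTupNorm B ^ 2 * ‖x‖ ^ 2 := by rw [hT]; ring

lemma sqrt_sum_norm_sq_le_opTupNorm {x : H} (hx : ‖x‖ = 1) :
    √(∑ j, ‖B j x‖ ^ 2) ≤ opTupNorm B := by
  refine Real.sqrt_le_iff.2 ⟨Real.sqrt_nonneg _, ?_⟩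
  simpa [hx] using sum_norm_sq_le_opTupNorm_sq_mul B x

lemma sqrt_opVar_le_opTupNorm {x : H} (hx : ‖x‖ = 1) : √(opVar B x) ≤ opTupNorm B :=
  (Real.sqrt_le_sqrt (opVar_le_sum_norm_sq B x)).trans (sqrt_sum_norm_sq_le_opTupNorm B hx)

lemma opTupNorm_nonneg_s14 : 0 ≤ opTupNorm B := Real.sqrt_nonneg _

lemma opTupNorm_mem_upperBounds_opStdDevSet : opTupNorm B ∈ upperBounds (opStdDevSet B) := by
  rintro _ ⟨x, hx, rfl⟩
  exact sqrt_opVar_le_opTupNorm B (mem_sphere_zero_iff_norm.1 hx)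

lemma opTupNorm_mem_closure_of_zero_mem_W0 (h : 0 ∈ W0 B) :
    opTupNorm B ∈ closure (opStdDevSet B) := by
  obtain ⟨x, hx, hnorm, hinner⟩ := h
  have hsum : Tendsto (fun n => ∑ j, ‖B j (x n)‖ ^ 2) atTop (𝓝 (opTupNorm B ^ 2)) := by
    simpa [Real.sq_sqrt (Finset.sum_nonneg fun _ _ => sq_nonneg _)] using hnorm.pow 2
  have hinner_sum : Tendsto (fun n => ∑ j, ‖inner ℂ (x n) (B j (x n))‖ ^ 2) atTop (𝓝 0) := by
    simpa using tendsto_finsetSum Finset.univ fun j _ => (hinner j).norm.pow 2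
  have hvar : Tendsto (fun n => √(opVar B (x n))) atTop (𝓝 (opTupNorm B)) := by
    simpa [opVar, Real.sqrt_sq (opTupNorm_nonneg_s14 B)] using (hsum.sub hinner_sum).sqrt
  exact mem_closure_of_tendsto hvar
    (Eventually.of_forall fun n => ⟨x n, mem_sphere_zero_iff_norm.2 (hx n), rfl⟩)

lemma zero_mem_W0_of_tendsto_sqrt_opVar {x : ℕ → H} (hx : ∀ n, ‖x n‖ = 1)
    (h : Tendsto (fun n => √(opVar B (x n))) atTop (𝓝 (opTupNorm B))) : 0 ∈ W0 B := by
  have hnorm : Tendsto (fun n => √(∑ j, ‖B j (x n)‖ ^ 2)) atTop (𝓝 (opTupNorm B)) :=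
    tendsto_of_tendsto_of_tendsto_of_le_of_le h tendsto_const_nhds
      (fun n => Real.sqrt_le_sqrt (opVar_le_sum_norm_sq B (x n)))
      (fun n => sqrt_sum_norm_sq_le_opTupNorm B (hx n))
  have hinner_sum : Tendsto (fun n => ∑ j, ‖inner ℂ (x n) (B j (x n))‖ ^ 2) atTop (𝓝 0) := by
    have hdiff : ∀ n, ∑ j, ‖inner ℂ (x n) (B j (x n))‖ ^ 2 =
        √(∑ j, ‖B j (x n)‖ ^ 2) ^ 2 - √(opVar B (x n)) ^ 2 := fun n => by
      rw [Real.sq_sqrt (Finset.sum_nonneg fun _ _ => sq_nonneg _),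
        Real.sq_sqrt (opVar_nonneg B (hx n)), opVar, sub_sub_cancel]
    simpa [← hdiff] using (hnorm.pow 2).sub (h.pow 2)
  refine ⟨x, hx, hnorm, fun j => tendsto_zero_iff_norm_tendsto_zero.2 ?_⟩
  refine squeeze_zero (fun _ => norm_nonneg _) (fun n => Real.le_sqrt_of_sq_le ?_)
    (by simpa using hinner_sum.sqrt)
  exact Finset.single_le_sum (f := fun i => ‖inner ℂ (x n) (B i (x n))‖ ^ 2)
    (fun _ _ => sq_nonneg _) (Finset.mem_univ j)

lemma zero_mem_W0_iff_opTupNorm_mem_closure :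
    0 ∈ W0 B ↔ opTupNorm B ∈ closure (opStdDevSet B) := by
  refine ⟨opTupNorm_mem_closure_of_zero_mem_W0 B, fun h => ?_⟩
  obtain ⟨r, hr, hlim⟩ := mem_closure_iff_seq_limit.1 h
  choose x hx hrx using hr
  simp only [mem_sphere_zero_iff_norm] at hx
  exact zero_mem_W0_of_tendsto_sqrt_opVar B hx (by simpa [hrx] using hlim)

lemma sSup_orthoPairingSet_eq_sSup_opStdDevSet :
    sSup (orthoPairingSet B) = sSup (opStdDevSet B) := by
  have hV : BddAbove (opStdDevSet B) := ⟨_, opTupNorm_mem_upperBounds_opStdDevSet B⟩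
  have hS : BddAbove (orthoPairingSet B) := by
    refine ⟨opTupNorm B, ?_⟩
    rintro _ ⟨x, y, hx, hy, hxy, rfl⟩
    exact (norm_sum_inner_le_sqrt_opVar B hx hy hxy).trans (sqrt_opVar_le_opTupNorm B hx)
  have hS0 : 0 ≤ sSup (orthoPairingSet B) := by
    refine Real.sSup_nonneg ?_
    rintro _ ⟨x, y, -, -, -, rfl⟩
    exact norm_nonneg _
  have hV0 : 0 ≤ sSup (opStdDevSet B) := by
    refine Real.sSup_nonneg ?_
    rintro _ ⟨x, -, rfl⟩
    exact Real.sqrt_nonneg _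
  refine le_antisymm (Real.sSup_le ?_ hV0) (Real.sSup_le ?_ hS0)
  · rintro _ ⟨x, y, hx, hy, hxy, rfl⟩
    exact (norm_sum_inner_le_sqrt_opVar B hx hy hxy).trans
      (le_csSup hV ⟨x, mem_sphere_zero_iff_norm.2 hx, rfl⟩)
  · rintro _ ⟨x, hx, rfl⟩
    rw [mem_sphere_zero_iff_norm] at hx
    rcases (opVar_nonneg B hx).eq_or_lt with hvar | hvar
    · simpa [← hvar] using hS0
    · obtain ⟨y, hy, hxy, hr⟩ := exists_sqrt_opVar_eq_norm_sum_inner B hx hvar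
      exact le_csSup hS ⟨x, y, hx, hy, hxy, hr⟩

end OpTupNorm

/-- with `z⁰` the minimizer of `‖A - zI‖` and `A⁰ = A - z⁰I`,
`0 ∈ W₀(A⁰)` iff `dist(A, ℂᵈI)` equals the supremum of `|⟨Ax, y⟩|` over unit vectors
`x ∈ H`, `y ∈ H^d` with `⟨x, yⱼ⟩ = 0` for all `j`. -/
theorem zero_mem_W0_iff_dist_eq_sup [Nontrivial H]
    {d : ℕ} (A : Fin d → H →L[ℂ] H) (z0 : Fin d → ℂ)
    (hz0 : ∀ z : Fin d → ℂ,
      opTupNorm (fun j => A j - z0 j • (1 : H →L[ℂ] H)) ≤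
        opTupNorm (fun j => A j - z j • (1 : H →L[ℂ] H))) :
    (0 : Fin d → ℂ) ∈ W0 (fun j => A j - z0 j • (1 : H →L[ℂ] H)) ↔
      (⨅ z : Fin d → ℂ, opTupNorm (fun j => A j - z j • (1 : H →L[ℂ] H))) =
        sSup {r : ℝ | ∃ (x : H) (y : Fin d → H), ‖x‖ = 1 ∧ (∑ j, ‖y j‖ ^ 2) = 1 ∧
          (∀ j, (inner ℂ x (y j) : ℂ) = 0) ∧
          r = ‖∑ j, (inner ℂ (A j x) (y j) : ℂ)‖} := by
  set B := fun j => A j - z0 j • (1 : H →L[ℂ] H)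
  have hdist : ⨅ z : Fin d → ℂ, opTupNorm (fun j => A j - z j • (1 : H →L[ℂ] H)) =
      opTupNorm B :=
    le_antisymm (ciInf_le ⟨_, Set.forall_mem_range.2 hz0⟩ z0) (le_ciInf hz0)
  have hne : (opStdDevSet B).Nonempty := (NormedSpace.sphere_nonempty.2 zero_le_one).image _
  change _ ↔ _ = sSup (orthoPairingSet A)
  rw [zero_mem_W0_iff_opTupNorm_mem_closure, hdist, ← orthoPairingSet_sub_smul_one A z0,
    sSup_orthoPairingSet_eq_sSup_opStdDevSet, eq_comm]
  exact mem_closure_iff_csSup_eq hne (opTupNorm_mem_upperBounds_opStdDevSet B)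
end

section
/- Let A = (A_1, A_2) with A_1 = [[1,0],[0,0]] and A_2 = [[0,0],[1,0]]. Then dist(A, C²I)² = 1, attained uniquely at z⁰ = (1, 0), and max_{‖x‖=1} var_x(A) = 1 = dist(A, C²I)², even though W₀(A⁰) = { (−|z_2|², z_2 \overline{z_1}) : |z_1|² + |z_2|² = 1 } is not convex. -/
open Matrix

/-- For matrix tuples, `W₀(A) = 𝒱(A) = { (⟨x,A₁x⟩,…) : ‖x‖ = 1, A*A x = ‖A‖² x }`. -/
def VSet {n : Type*} [Fintype n] [DecidableEq n] {d : ℕ}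
    (A : Fin d → Matrix n n ℂ) : Set (Fin d → ℂ) :=
  {v | ∃ x : n → ℂ, star x ⬝ᵥ x = 1 ∧
    (∑ j, (A j)ᴴ * A j).mulVec x = ((tupNorm A : ℂ) ^ 2) • x ∧
    v = fun j => star x ⬝ᵥ (A j).mulVec x}

/-! The `(0,0)` entry of the Gram matrix `∑ⱼ (Aⱼ - zⱼ)ᴴ (Aⱼ - zⱼ)` is `|1 - z₁|² + |z₂|² + 1`,
and an entry of a matrix is bounded by its operator norm; hence `‖A - z‖ ≥ 1`, with equality only
at `z = (1, 0)`. There the Gram matrix is the identity, so `W₀(A⁰)` is the whole joint numerical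
range, and on unit vectors `var_x(A) = |x₁|²`. The points `(0, 0)` and `(-1, 0)` lie in `W₀(A⁰)`,
but their midpoint would need `|z₂|² = 1/2` together with `z₂ z̄₁ = 0`. -/

section TupleNorm

variable {n : Type*} [Fintype n] [DecidableEq n] {d : ℕ}

lemma norm_apply_le_matOpNorm (M : Matrix n n ℂ) (i j : n) : ‖M i j‖ ≤ matOpNorm M := by
  set T := toEuclideanCLM (n := n) (𝕜 := ℂ) M
  calc ‖M i j‖ = ‖T (EuclideanSpace.single j 1) i‖ := by
        simp [T, ← PiLp.toLp_single, toEuclideanCLM_toLp]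
    _ ≤ ‖T (EuclideanSpace.single j 1)‖ := PiLp.norm_apply_le _ i
    _ ≤ ‖T‖ * ‖EuclideanSpace.single j (1 : ℂ)‖ := T.le_opNorm _
    _ = matOpNorm M := by simp [T, matOpNorm]

lemma matOpNorm_one [Nonempty n] : matOpNorm (1 : Matrix n n ℂ) = 1 := by
  rw [matOpNorm, map_one, norm_one]

lemma tupNorm_nonneg (A : Fin d → Matrix n n ℂ) : 0 ≤ tupNorm A :=
  Real.sqrt_nonneg _

lemma tupNorm_sq (A : Fin d → Matrix n n ℂ) :
    tupNorm A ^ 2 = matOpNorm (∑ j, (A j)ᴴ * A j) :=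
  Real.sq_sqrt (norm_nonneg _)

lemma sum_sum_norm_sq_apply_le_tupNorm_sq (A : Fin d → Matrix n n ℂ) (i : n) :
    ∑ j, ∑ k, ‖A j k i‖ ^ 2 ≤ tupNorm A ^ 2 := by
  have hdiag : (∑ j, (A j)ᴴ * A j) i i = ((∑ j, ∑ k, ‖A j k i‖ ^ 2 : ℝ) : ℂ) := by
    simp [Matrix.sum_apply, Matrix.mul_apply, Complex.conj_mul']
  have h := norm_apply_le_matOpNorm (∑ j, (A j)ᴴ * A j) i i
  rwa [hdiag, Complex.norm_of_nonneg (by positivity), ← tupNorm_sq] at h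

lemma tupNorm_eq_one_of_gram_eq_one [Nonempty n] {A : Fin d → Matrix n n ℂ}
    (hA : ∑ j, (A j)ᴴ * A j = 1) : tupNorm A = 1 := by
  rw [tupNorm, hA, matOpNorm_one, Real.sqrt_one]

lemma VSet_eq_of_gram_eq_one [Nonempty n] {A : Fin d → Matrix n n ℂ}
    (hA : ∑ j, (A j)ᴴ * A j = 1) :
    VSet A = {v | ∃ x : n → ℂ, star x ⬝ᵥ x = 1 ∧ v = fun j => star x ⬝ᵥ A j *ᵥ x} := by
  ext v
  simp [VSet, hA, tupNorm_eq_one_of_gram_eq_one hA]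

def tupShift (A : Fin d → Matrix n n ℂ) (z : Fin d → ℂ) : Fin d → Matrix n n ℂ :=
  fun j => A j - z j • 1

end TupleNorm

def pairA : Fin 2 → Matrix (Fin 2) (Fin 2) ℂ := ![!![1, 0; 0, 0], !![0, 0; 1, 0]]

def pairW0 : Set (Fin 2 → ℂ) :=
  {v | ∃ z1 z2 : ℂ, ‖z1‖ ^ 2 + ‖z2‖ ^ 2 = 1 ∧
    v = ![((-(‖z2‖ ^ 2) : ℝ) : ℂ), z2 * (starRingEnd ℂ) z1]}

lemma star_dotProduct_self_fin_two (x : Fin 2 → ℂ) :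
    star x ⬝ᵥ x = ((‖x 0‖ ^ 2 + ‖x 1‖ ^ 2 : ℝ) : ℂ) := by
  simp [dotProduct, Fin.sum_univ_two, Complex.conj_mul']

lemma norm_sub_sq_add_one_le_tupNorm_tupShift_pairA_sq (z : Fin 2 → ℂ) :
    ‖1 - z 0‖ ^ 2 + ‖z 1‖ ^ 2 + 1 ≤ tupNorm (tupShift pairA z) ^ 2 := by
  simpa [tupShift, pairA, Fin.sum_univ_two, add_assoc] using
    sum_sum_norm_sq_apply_le_tupNorm_sq (tupShift pairA z) 0

lemma one_le_tupNorm_tupShift_pairA (z : Fin 2 → ℂ) : 1 ≤ tupNorm (tupShift pairA z) :=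
  (one_le_sq_iff₀ (tupNorm_nonneg _)).1 <|
    (le_add_of_nonneg_left (by positivity)).trans
      (norm_sub_sq_add_one_le_tupNorm_tupShift_pairA_sq z)

lemma eq_of_tupNorm_tupShift_pairA_eq_one {z : Fin 2 → ℂ}
    (hz : tupNorm (tupShift pairA z) = 1) : z = ![1, 0] := by
  have h := norm_sub_sq_add_one_le_tupNorm_tupShift_pairA_sq z
  rw [hz, one_pow] at h
  obtain ⟨h0, h1⟩ := (add_eq_zero_iff_of_nonneg (by positivity) (by positivity)).1 <|
    le_antisymm (by linarith) (by positivity : 0 ≤ ‖1 - z 0‖ ^ 2 + ‖z 1‖ ^ 2)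
  rw [pow_eq_zero_iff two_ne_zero, norm_eq_zero, sub_eq_zero] at h0
  rw [pow_eq_zero_iff two_ne_zero, norm_eq_zero] at h1
  ext i
  fin_cases i <;> simp [← h0, h1]

lemma gram_tupShift_pairA_one_zero :
    ∑ j, (tupShift pairA ![1, 0] j)ᴴ * tupShift pairA ![1, 0] j = 1 := by
  ext i j
  fin_cases i <;> fin_cases j <;> simp [tupShift, pairA, Fin.sum_univ_two, Matrix.mul_apply]

lemma VSet_tupShift_pairA_one_zero : VSet (tupShift pairA ![1, 0]) = pairW0 := by
  rw [VSet_eq_of_gram_eq_one gram_tupShift_pairA_one_zero]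
  ext v
  constructor
  · rintro ⟨x, hx, rfl⟩
    refine ⟨star (x 0), star (x 1), ?_, ?_⟩
    · rw [star_dotProduct_self_fin_two] at hx
      simpa using (by exact_mod_cast hx : ‖x 0‖ ^ 2 + ‖x 1‖ ^ 2 = (1 : ℝ))
    · ext j
      fin_cases j <;> simp [tupShift, pairA, dotProduct, Fin.sum_univ_two, Complex.conj_mul']
  · rintro ⟨z1, z2, h, rfl⟩
    refine ⟨![star z1, star z2], ?_, ?_⟩
    · rw [star_dotProduct_self_fin_two]
      simp [h]
    · ext j
      fin_cases j <;> simp [tupShift, pairA, dotProduct, Fin.sum_univ_two, Complex.mul_conj']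

lemma not_convex_pairW0 : ¬ Convex ℝ pairW0 := by
  intro hconv
  have h0 : ![0, 0] ∈ pairW0 := ⟨1, 0, by simp, by simp⟩
  have h1 : ![-1, 0] ∈ pairW0 := ⟨0, 1, by simp, by simp⟩
  obtain ⟨z1, z2, h, hv⟩ := hconv h0 h1 one_half_pos.le one_half_pos.le (add_halves 1)
  have hz2 : ‖z2‖ ^ 2 = 2⁻¹ := by
    simpa [← Complex.ofReal_pow] using (congrArg Complex.re (congrFun hv 0)).symm
  have him : z2 = 0 ∨ z1 = 0 := by simpa using congrFun hv 1
  rcases him with rfl | rfl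
  · norm_num at hz2
  · rw [norm_zero] at h
    linarith

lemma matVar_pairA {x : Fin 2 → ℂ} (hx : ‖x 0‖ ^ 2 + ‖x 1‖ ^ 2 = 1) :
    matVar pairA x = ‖x 0‖ ^ 2 := by
  have h : matVar pairA x = ‖x 0‖ ^ 2 + ‖x 0‖ ^ 2 - ((‖x 0‖ ^ 2) ^ 2 + (‖x 1‖ * ‖x 0‖) ^ 2) := by
    simp [matVar, vecNormSq, pairA, dotProduct, Fin.sum_univ_two, Complex.conj_mul',
      ← Complex.ofReal_pow]
  rw [h]
  linear_combination (-‖x 0‖ ^ 2) * hx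

lemma isGreatest_matVar_pairA :
    IsGreatest {v : ℝ | ∃ x : Fin 2 → ℂ, star x ⬝ᵥ x = 1 ∧ v = matVar pairA x} 1 := by
  refine ⟨⟨![1, 0], by simp [dotProduct], ?_⟩, ?_⟩
  · rw [matVar_pairA] <;> simp
  · rintro v ⟨x, hx, rfl⟩
    rw [star_dotProduct_self_fin_two] at hx
    have hx' : ‖x 0‖ ^ 2 + ‖x 1‖ ^ 2 = 1 := by exact_mod_cast hx
    rw [matVar_pairA hx']
    linarith [sq_nonneg ‖x 1‖]

/-- for `A = ([[1,0],[0,0]], [[0,0],[1,0]])`, `dist(A, ℂ²I)² = 1`,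
attained uniquely at `z⁰ = (1,0)`; `max_{‖x‖=1} var_x(A) = 1 = dist(A, ℂ²I)²`, even
though `W₀(A⁰) = { (-|z₂|², z₂ conj z₁) : |z₁|² + |z₂|² = 1 }` is not convex. -/
theorem nonconvex_W0_example :
    let A : Fin 2 → Matrix (Fin 2) (Fin 2) ℂ := ![!![1, 0; 0, 0], !![0, 0; 1, 0]]
    let A0 : Fin 2 → Matrix (Fin 2) (Fin 2) ℂ :=
      fun j => A j - (![1, 0] : Fin 2 → ℂ) j • (1 : Matrix (Fin 2) (Fin 2) ℂ)
    (∀ z : Fin 2 → ℂ,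
        1 ≤ tupNorm (fun j => A j - z j • (1 : Matrix (Fin 2) (Fin 2) ℂ))) ∧
    tupNorm A0 = 1 ∧
    (∀ z : Fin 2 → ℂ,
        tupNorm (fun j => A j - z j • (1 : Matrix (Fin 2) (Fin 2) ℂ)) = 1 →
          z = ![1, 0]) ∧
    IsGreatest {v : ℝ | ∃ x : Fin 2 → ℂ, star x ⬝ᵥ x = 1 ∧ v = matVar A x} 1 ∧
    VSet A0 = {v : Fin 2 → ℂ | ∃ z1 z2 : ℂ,
        ‖z1‖ ^ 2 + ‖z2‖ ^ 2 = 1 ∧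
        v = ![((-(‖z2‖ ^ 2) : ℝ) : ℂ), z2 * (starRingEnd ℂ) z1]} ∧
    ¬ Convex ℝ (VSet A0) := by
  intro A A0
  have hW0 : VSet A0 = pairW0 := VSet_tupShift_pairA_one_zero
  exact ⟨one_le_tupNorm_tupShift_pairA, tupNorm_eq_one_of_gram_eq_one gram_tupShift_pairA_one_zero,
    fun _ => eq_of_tupNorm_tupShift_pairA_eq_one, isGreatest_matVar_pairA, hW0,
    hW0 ▸ not_convex_pairW0⟩
end
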